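/- Let α ∈ {−1,1}. There exists an injective group homomorphism φ_α : O₂(α) → (Cl(Q_α))ˣ into the group of units of the Clifford algebra Cl(Q_α) such that for every z = x + iy ∈ Circle (x, y ∈ ℝ): the underlying element of φ_α(z, 0̂) is x·1 + y·(ι(1)·ι(i)) and the underlying element of φ_α(z, 1̂) is (x·1 + y·ι(1)·ι(i))·ι(1). (This realizes O₂(α) as the pin group Pin₂(α) inside Cl(Q_α).) -/

import Mathlib

set_option linter.unnecessarySeqFocus false

open Complex

/-- Complex conjugation as a group endomorphism of the circle group. -/
noncomputable def conjC : Circle →* Circle where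
  toFun z := ⟨(starRingEnd ℂ) (z : ℂ), by
    simp only [Submonoid.unitSphere, Metric.mem_sphere, dist_zero_right]
    simp [Circle.norm_coe]⟩
  map_one' := by ext; simp
  map_mul' a b := by ext; simp <;> rfl

@[simp] lemma conjC_coe (z : Circle) : (conjC z : ℂ) = (starRingEnd ℂ) (z : ℂ) := rfl

@[simp] lemma conjC_conjC (z : Circle) : conjC (conjC z) = z := by
  ext; simp

/-- The element `-1` of the circle group. -/
noncomputable def negOneC : Circle := ⟨-1, by
  simp only [Submonoid.unitSphere, Metric.mem_sphere, dist_zero_right]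
  simp⟩

@[simp] lemma negOneC_coe : (negOneC : ℂ) = -1 := rfl

/-- The sign `α = ±1` as an element of the circle group. -/
noncomputable def sgnC (α : ℤˣ) : Circle := if α = 1 then 1 else negOneC

/-- The underlying type of a twisted extension of `ℤ₂ = {0̂, 1̂}` by a commutative group `A`,
with twisting endomorphism `τ` and cocycle value `a₀`.  An element `⟨z, t⟩` stands for the
pair `(z, t)`.  The group `O₂(α)` of the paper is the case `A = Circle`, `τ` = complex
conjugation, `a₀ = α = ±1`. -/
@[ext]
structure Tw (A : Type*) [CommGroup A] (τ : A →* A) (a₀ : A) where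
  z : A
  t : ZMod 2

namespace Tw

variable {A : Type*} [CommGroup A] {τ : A →* A} {a₀ : A}

/-- The multiplication `(z₁,0̂)(z₂,t) = (z₁z₂, t)`, `(z₁,1̂)(z₂,0̂) = (z₁·τ(z₂), 1̂)`,
`(z₁,1̂)(z₂,1̂) = (a₀·z₁·τ(z₂), 0̂)`. -/
instance : Mul (Tw A τ a₀) :=
  ⟨fun g h => ⟨(if g.t = 1 ∧ h.t = 1 then a₀ else 1) * g.z * (if g.t = 1 then τ h.z else h.z),
    g.t + h.t⟩⟩

/-- The unit `(1, 0̂)`. -/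
instance : One (Tw A τ a₀) := ⟨⟨1, 0⟩⟩

instance : Inv (Tw A τ a₀) := ⟨fun g => ⟨if g.t = 1 then a₀⁻¹ * τ g.z⁻¹ else g.z⁻¹, g.t⟩⟩

@[simp] lemma mul_z (g h : Tw A τ a₀) :
    (g * h).z = (if g.t = 1 ∧ h.t = 1 then a₀ else 1) * g.z * (if g.t = 1 then τ h.z else h.z) :=
  rfl

@[simp] lemma mul_t (g h : Tw A τ a₀) : (g * h).t = g.t + h.t := rfl

@[simp] lemma one_z : (1 : Tw A τ a₀).z = 1 := rfl
@[simp] lemma one_t : (1 : Tw A τ a₀).t = 0 := rfl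

@[simp] lemma inv_z (g : Tw A τ a₀) :
    (g⁻¹).z = if g.t = 1 then a₀⁻¹ * τ g.z⁻¹ else g.z⁻¹ := rfl
@[simp] lemma inv_t (g : Tw A τ a₀) : (g⁻¹).t = g.t := rfl

lemma zmod2_cases : ∀ t : ZMod 2, t = 0 ∨ t = 1 := by decide

instance group [Fact (∀ a : A, τ (τ a) = a)] [Fact (τ a₀ = a₀)] : Group (Tw A τ a₀) := by
  have hττ := Fact.out (p := ∀ a : A, τ (τ a) = a)
  have hτa := Fact.out (p := τ a₀ = a₀)
  refine Group.ofLeftAxioms ?_ ?_ ?_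
  · rintro ⟨z₁, t₁⟩ ⟨z₂, t₂⟩ ⟨z₃, t₃⟩
    rcases zmod2_cases t₁ with rfl | rfl <;> rcases zmod2_cases t₂ with rfl | rfl <;>
      rcases zmod2_cases t₃ with rfl | rfl <;> ext <;>
      simp [hττ, hτa, map_mul, mul_comm, mul_assoc, mul_left_comm] <;> decide
  · rintro ⟨z, t⟩
    ext <;> simp
  · rintro ⟨z, t⟩
    rcases zmod2_cases t with rfl | rfl <;> ext <;>
      simp [hττ, hτa, map_mul, mul_comm, mul_assoc, mul_left_comm] <;> decide

end Tw

instance : Fact (∀ a : Circle, conjC (conjC a) = a) := ⟨conjC_conjC⟩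

instance (α : ℤˣ) : Fact (conjC (sgnC α) = sgnC α) := ⟨by
  rcases Int.units_eq_one_or α with rfl | rfl <;> ext <;> simp [sgnC]⟩

/-- The group `O₂(α)` for a sign `α ∈ {−1, 1}`: underlying set `Circle × ℤ₂` with the
twisted multiplication `(z₁,0̂)(z₂,t) = (z₁z₂,t)`, `(z₁,1̂)(z₂,0̂) = (z₁·conj(z₂),1̂)`,
`(z₁,1̂)(z₂,1̂) = (α·z₁·conj(z₂),0̂)` and unit `(1,0̂)`. -/
abbrev O2 (α : ℤˣ) : Type := Tw Circle conjC (sgnC α)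


/-!
Write `e₁ = ι(1)`, `e₂ = ι(i)`. Since `1 ⊥ i` and `Q_α(1) = Q_α(i) = α`, the bivector
`ω = e₁e₂` squares to `-α² = -1`, so `x + iy ↦ x + yω` embeds `ℂ` into `Cl(Q_α)`, and
`e₁` anticommutes with `ω`, i.e. conjugation by `e₁` acts as complex conjugation, while
`e₁² = α`. These are exactly the relations of `O₂(α)`, so `(z, t) ↦ z·e₁ᵗ` is a homomorphism.
It is injective because the circle embeds and `e₁` is not in its image: the grade
involution fixes the even element `ω` but negates the vector `e₁`.
-/

namespace Tw

variable {A : Type*} [CommGroup A] {τ : A →* A} {a₀ : A}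
  [Fact (∀ a : A, τ (τ a) = a)] [Fact (τ a₀ = a₀)] {G : Type*} [Group G]

def lift (u : A →* G) (e : G) (he : ∀ a, e * u a = u (τ a) * e) (hee : e * e = u a₀) :
    Tw A τ a₀ →* G where
  toFun g := u g.z * if g.t = 1 then e else 1
  map_one' := by simp
  map_mul' := by
    rintro ⟨z₁, t₁⟩ ⟨z₂, t₂⟩
    rcases zmod2_cases t₁ with rfl | rfl <;> rcases zmod2_cases t₂ with rfl | rfl <;>
      simp [show (0 : ZMod 2) ≠ 1 by decide, show (1 + 1 : ZMod 2) = 0 by decide, mul_assoc]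
    · exact (he z₂).symm
    · rw [← mul_assoc e, he, mul_assoc, hee, ← map_mul, ← map_mul, ← map_mul, ← map_mul]
      ac_rfl

@[simp]
lemma lift_mk_zero (u : A →* G) (e : G) (he : ∀ a, e * u a = u (τ a) * e)
    (hee : e * e = u a₀) (z : A) : Tw.lift u e he hee ⟨z, 0⟩ = u z := by
  simp [Tw.lift, show (0 : ZMod 2) ≠ 1 by decide]

@[simp]
lemma lift_mk_one (u : A →* G) (e : G) (he : ∀ a, e * u a = u (τ a) * e)
    (hee : e * e = u a₀) (z : A) : Tw.lift u e he hee ⟨z, 1⟩ = u z * e := by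
  simp [Tw.lift]

lemma lift_injective (u : A →* G) (e : G) (he : ∀ a, e * u a = u (τ a) * e)
    (hee : e * e = u a₀) (hu : Function.Injective u) (he_notMem : ∀ a, u a ≠ e) :
    Function.Injective (Tw.lift u e he hee) := by
  rintro ⟨z₁, t₁⟩ ⟨z₂, t₂⟩ h
  rcases zmod2_cases t₁ with rfl | rfl <;> rcases zmod2_cases t₂ with rfl | rfl <;>
    simp only [lift_mk_zero, lift_mk_one] at h
  · rw [hu h]
  · exact absurd (by rw [map_mul, map_inv, h, inv_mul_cancel_left]) (he_notMem (z₂⁻¹ * z₁))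
  · exact absurd (by rw [map_mul, map_inv, ← h, inv_mul_cancel_left]) (he_notMem (z₁⁻¹ * z₂))
  · rw [hu (mul_right_cancel h)]

end Tw

lemma Complex.mul_liftAux {R : Type*} [Ring R] [Algebra ℝ R] {j e : R} (hj : j * j = -1)
    (hej : e * j = -(j * e)) (w : ℂ) :
    e * liftAux j hj w = liftAux j hj (starRingEnd ℂ w) * e := by
  simp only [liftAux_apply, conj_re, conj_im, mul_add, add_mul, mul_smul_comm, smul_mul_assoc,
    Algebra.commutes, hej, neg_smul, smul_neg, neg_mul]

namespace CliffordAlgebra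

open Complex

variable {M : Type*} [AddCommGroup M] [Module ℝ M] {Q : QuadraticForm ℝ M} {v w : M}

lemma ι_mul_ι_mul_ι_mul_ι_of_isOrtho (hvw : Q.IsOrtho v w) :
    (ι Q v * ι Q w) * (ι Q v * ι Q w) = -algebraMap ℝ _ (Q v * Q w) := by
  rw [mul_ι_mul_ι_mul_comm_of_isOrtho _ hvw.symm, ι_sq_scalar, ι_sq_scalar, map_mul]

lemma ι_mul_ι_mul_ι_self_of_isOrtho (hvw : Q.IsOrtho v w) :
    ι Q v * (ι Q v * ι Q w) = -((ι Q v * ι Q w) * ι Q v) := by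
  rw [← mul_assoc, mul_ι_mul_ι_of_isOrtho _ hvw, mul_assoc]

noncomputable def complexOfIsOrtho (hvw : Q.IsOrtho v w) (hQ : Q v * Q w = 1) :
    ℂ →ₐ[ℝ] CliffordAlgebra Q :=
  liftAux (ι Q v * ι Q w) (by rw [ι_mul_ι_mul_ι_mul_ι_of_isOrtho hvw, hQ, map_one])

variable (hvw : Q.IsOrtho v w) (hQ : Q v * Q w = 1)

lemma complexOfIsOrtho_apply (z : ℂ) :
    complexOfIsOrtho hvw hQ z = algebraMap ℝ _ z.re + z.im • (ι Q v * ι Q w) :=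
  liftAux_apply _ _ z

lemma ι_mul_complexOfIsOrtho (z : ℂ) :
    ι Q v * complexOfIsOrtho hvw hQ z = complexOfIsOrtho hvw hQ (starRingEnd ℂ z) * ι Q v :=
  mul_liftAux _ (ι_mul_ι_mul_ι_self_of_isOrtho hvw) z

lemma involute_complexOfIsOrtho (z : ℂ) :
    involute (complexOfIsOrtho hvw hQ z) = complexOfIsOrtho hvw hQ z := by
  simp [complexOfIsOrtho_apply, involute_ι]

lemma complexOfIsOrtho_ne_ι (hv : IsUnit (Q v)) (z : ℂ) : complexOfIsOrtho hvw hQ z ≠ ι Q v := by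
  intro h
  have hneg : ι Q v + ι Q v = 0 := by
    rw [← eq_neg_iff_add_eq_zero, ← involute_ι, ← h, involute_complexOfIsOrtho]
  refine (isUnit_ι_of_isUnit Q hv).ne_zero ?_
  simpa [← two_smul ℝ] using hneg

noncomputable def circleToUnits : Circle →* (CliffordAlgebra Q)ˣ :=
  (Units.map (complexOfIsOrtho hvw hQ : ℂ →* CliffordAlgebra Q)).comp Circle.toUnits

@[simp]
lemma coe_circleToUnits (z : Circle) :
    (circleToUnits hvw hQ z : CliffordAlgebra Q) = complexOfIsOrtho hvw hQ z :=
  rfl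

lemma circleToUnits_injective : Function.Injective (circleToUnits hvw hQ) := fun _ _ h =>
  Circle.coe_injective ((complexOfIsOrtho hvw hQ).toRingHom.injective (congrArg Units.val h))

end CliffordAlgebra

lemma sgnC_coe (α : ℤˣ) : (sgnC α : ℂ) = ((α : ℤ) : ℂ) := by
  rcases Int.units_eq_one_or α with rfl | rfl <;> simp [sgnC]

open CliffordAlgebra in
/-- `O₂(α)` is realized as the pin group `Pin₂(α)` inside the Clifford algebra of the
quadratic form `Q_α(w) = α·|w|²` on `ℂ ≅ ℝ²`: there is an injective group homomorphism
`φ_α : O₂(α) → Cl(Q_α)ˣ` with `φ_α(z,0̂) = x·1 + y·ι(1)ι(i)` and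
`φ_α(z,1̂) = (x·1 + y·ι(1)ι(i))·ι(1)` for `z = x + iy`. -/
theorem O2_realized_as_pin_group (α : ℤˣ) (Q : QuadraticForm ℝ ℂ)
    (hQ : ∀ w : ℂ, Q w = (α : ℝ) * Complex.normSq w) :
    ∃ φ : O2 α →* (CliffordAlgebra Q)ˣ,
      Function.Injective φ ∧
      (∀ z : Circle, ((φ ⟨z, 0⟩ : (CliffordAlgebra Q)ˣ) : CliffordAlgebra Q) =
        algebraMap ℝ (CliffordAlgebra Q) (z : ℂ).re +
          (z : ℂ).im • (ι Q 1 * ι Q Complex.I)) ∧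
      (∀ z : Circle, ((φ ⟨z, 1⟩ : (CliffordAlgebra Q)ˣ) : CliffordAlgebra Q) =
        (algebraMap ℝ (CliffordAlgebra Q) (z : ℂ).re +
          (z : ℂ).im • (ι Q 1 * ι Q Complex.I)) * ι Q 1) := by
  have hQ1 : Q 1 = (α : ℝ) := by simp [hQ]
  have hQI : Q Complex.I = (α : ℝ) := by simp [hQ]
  have hortho : Q.IsOrtho 1 Complex.I := by
    simp [QuadraticMap.isOrtho_def, hQ, normSq_add, mul_add]
  have hQQ : Q 1 * Q Complex.I = 1 := by
    rw [hQ1, hQI, ← Int.cast_mul, ← Units.val_mul, Int.units_mul_self, Units.val_one, Int.cast_one]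
  have hunit : IsUnit (Q 1) := .of_mul_eq_one _ hQQ
  set u := circleToUnits hortho hQQ
  set e := (isUnit_ι_of_isUnit Q hunit).unit
  have he : ∀ z, e * u z = u (conjC z) * e := fun z =>
    Units.ext (ι_mul_complexOfIsOrtho hortho hQQ z)
  have hee : e * e = u (sgnC α) := Units.ext <| by
    simp [e, u, ι_sq_scalar, hQ1, sgnC_coe]
  refine ⟨Tw.lift u e he hee, Tw.lift_injective u e he hee (circleToUnits_injective _ _)
    fun z h => complexOfIsOrtho_ne_ι hortho hQQ hunit z (congrArg Units.val h),
    fun z => ?_, fun z => ?_⟩ <;>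
  simp [u, e, complexOfIsOrtho_apply]
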